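/- The quantum W1 norm is equivalent to the trace norm with constants 1/2 and n/2: for any X ∈ O_n^T, (1/2)‖X‖₁ ≤ ‖X‖_{W1} ≤ (n/2)‖X‖₁. -/

import Mathlib

open scoped BigOperators
open scoped Classical
open scoped ComplexOrder

noncomputable section

namespace QW1

/-- Configurations of `n` qudits of local dimension `d`:
the index set of the canonical basis of `(ℂ^d)^{⊗ n}`. -/
abbrev Cfg (d n : ℕ) : Type := Fin n → Fin d

/-- Linear operators on the Hilbert space of `n` qudits, represented as matrices
in the canonical basis. -/
abbrev Mat (d n : ℕ) : Type := Matrix (Cfg d n) (Cfg d n) ℂ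

/-- The trace norm `‖A‖₁ = Tr √(Aᴴ A)`. -/
noncomputable def traceNorm {ι : Type} [Fintype ι] [DecidableEq ι] (A : Matrix ι ι ℂ) : ℝ :=
  (((Matrix.posSemidef_conjTranspose_mul_self A).1.eigenvectorUnitary : Matrix ι ι ℂ) *
    Matrix.diagonal (fun i => ((Real.sqrt ((Matrix.posSemidef_conjTranspose_mul_self A).1.eigenvalues i) : ℝ) : ℂ)) *
    (star (Matrix.posSemidef_conjTranspose_mul_self A).1.eigenvectorUnitary : Matrix ι ι ℂ)).trace.re

/-- The operator norm `‖A‖_∞`. -/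
noncomputable def opNorm {ι : Type} [Fintype ι] [DecidableEq ι] (A : Matrix ι ι ℂ) : ℝ :=
  ‖Matrix.toEuclideanCLM (𝕜 := ℂ) A‖

/-- Quantum states: positive semidefinite operators with unit trace. -/
def IsState {ι : Type} [Fintype ι] (ρ : Matrix ι ι ℂ) : Prop :=
  ρ.PosSemidef ∧ ρ.trace = 1

/-- Insert the value `s` at position `i` into a configuration `a` of the remaining qudits. -/
def ins {d n : ℕ} (i : Fin n) (a : {j : Fin n // j ≠ i} → Fin d) (s : Fin d) : Cfg d n :=
  fun j => if h : j = i then s else a ⟨j, h⟩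

/-- The partial trace over the `i`-th qudit. -/
noncomputable def ptrace {d n : ℕ} (i : Fin n) (X : Mat d n) :
    Matrix ({j : Fin n // j ≠ i} → Fin d) ({j : Fin n // j ≠ i} → Fin d) ℂ :=
  fun a b => ∑ s : Fin d, X (ins i a s) (ins i b s)

/-- The marginal of `ρ` on the `i`-th qudit (partial trace over all the other qudits). -/
noncomputable def marginal {d n : ℕ} (i : Fin n) (ρ : Mat d n) :
    Matrix (Fin d) (Fin d) ℂ :=
  fun s t => ∑ a : ({j : Fin n // j ≠ i} → Fin d), ρ (ins i a s) (ins i a t)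

/-- Combine a configuration `s` of the qudits in `I` with a configuration `a` of the rest. -/
def insSet {d n : ℕ} (I : Finset (Fin n)) (a : {j : Fin n // j ∉ I} → Fin d)
    (s : {j : Fin n // j ∈ I} → Fin d) : Cfg d n :=
  fun j => if h : j ∈ I then s ⟨j, h⟩ else a ⟨j, h⟩

/-- The partial trace over the qudits in `I`. -/
noncomputable def ptraceSet {d n : ℕ} (I : Finset (Fin n)) (X : Mat d n) :
    Matrix ({j : Fin n // j ∉ I} → Fin d) ({j : Fin n // j ∉ I} → Fin d) ℂ :=
  fun a b => ∑ s : ({j : Fin n // j ∈ I} → Fin d), X (insSet I a s) (insSet I b s)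

/-- The set of values `(1/2) ∑ i ‖X⁽ⁱ⁾‖₁` over all decompositions `X = ∑ i X⁽ⁱ⁾` with
`X⁽ⁱ⁾` self-adjoint and `Tr_i X⁽ⁱ⁾ = 0`. -/
def W1Set {d n : ℕ} (X : Mat d n) : Set ℝ :=
  { r | ∃ Y : Fin n → Mat d n, (∀ i, (Y i).IsHermitian) ∧ (∀ i, ptrace i (Y i) = 0) ∧
      X = ∑ i, Y i ∧ r = (1 / 2) * ∑ i, traceNorm (Y i) }

/-- The quantum `W₁` norm. -/
noncomputable def W1 {d n : ℕ} (X : Mat d n) : ℝ := sInf (W1Set X)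

/-- The quantum Lipschitz constant: the dual norm of the quantum `W₁` norm. -/
noncomputable def lipschitz {d n : ℕ} (H : Mat d n) : ℝ :=
  sSup { r | ∃ X : Mat d n, X.IsHermitian ∧ X.trace = 0 ∧ W1 X ≤ 1 ∧
    r = ((H * X).trace).re }

/-- Extension `Φ ⊗ id_R` of a map on matrices. -/
def extendMap {A B R : Type} [Fintype A] [Fintype B] [Fintype R]
    (Φ : Matrix A A ℂ → Matrix B B ℂ) (M : Matrix (A × R) (A × R) ℂ) :
    Matrix (B × R) (B × R) ℂ :=
  fun p q => Φ (fun a a' => M (a, p.2) (a', q.2)) p.1 q.1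

/-- Quantum channels: completely positive trace-preserving linear maps. -/
def IsCPTP {A B : Type} [Fintype A] [Fintype B]
    (Φ : Matrix A A ℂ →ₗ[ℂ] Matrix B B ℂ) : Prop :=
  (∀ (k : ℕ) (M : Matrix (A × Fin k) (A × Fin k) ℂ), M.PosSemidef →
    (extendMap (fun N => Φ N) M).PosSemidef) ∧
  ∀ M, (Φ M).trace = M.trace

/-- Action `φ_i ⊗ id` of a single-qudit map `φ` on the `i`-th qudit of `n` qudits. -/
def applyAt {d n : ℕ} (i : Fin n) (φ : Matrix (Fin d) (Fin d) ℂ → Matrix (Fin d) (Fin d) ℂ)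
    (X : Mat d n) : Mat d n :=
  fun a b => φ (fun s t => X (Function.update a i s) (Function.update b i t)) (a i) (b i)

/-- Action `φ_I ⊗ id` of a map `φ` on the qudits in `I`. -/
def applyOn {d n : ℕ} (I : Finset (Fin n))
    (φ : Matrix ({j : Fin n // j ∈ I} → Fin d) ({j : Fin n // j ∈ I} → Fin d) ℂ →
         Matrix ({j : Fin n // j ∈ I} → Fin d) ({j : Fin n // j ∈ I} → Fin d) ℂ)
    (X : Mat d n) : Mat d n :=
  fun a b =>
    φ (fun s t => X (insSet I (fun j => a j) s) (insSet I (fun j => b j) t))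
      (fun j => a j) (fun j => b j)

/-- The operator obtained from `X` by permuting the tensor factors according to `π`. -/
def permuteMat {d n : ℕ} (π : Equiv.Perm (Fin n)) (X : Mat d n) : Mat d n :=
  fun a b => X (a ∘ π) (b ∘ π)

/-- Tensor product of an operator on the first `m` qudits with one on the last `n` qudits. -/
def tensorMN {d m n : ℕ} (A : Mat d m) (B : Mat d n) : Mat d (m + n) :=
  fun a b =>
    A (fun i => a (Fin.castAdd n i)) (fun i => b (Fin.castAdd n i)) *
    B (fun j => a (Fin.natAdd m j)) (fun j => b (Fin.natAdd m j))

/-- Partial trace of an operator on `m + n` qudits over the last `n` qudits. -/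
noncomputable def ptraceLast {d m n : ℕ} (X : Mat d (m + n)) : Mat d m :=
  fun a b => ∑ k : Cfg d n, X (Fin.append a k) (Fin.append b k)

/-- Partial trace of an operator on `m + n` qudits over the first `m` qudits. -/
noncomputable def ptraceFirst {d m n : ℕ} (X : Mat d (m + n)) : Mat d n :=
  fun a b => ∑ k : Cfg d m, X (Fin.append k a) (Fin.append k b)

/-- `n`-fold tensor product `σ₁ ⊗ ⋯ ⊗ σₙ` of single-qudit operators. -/
def tensorAll {d n : ℕ} (σs : Fin n → Matrix (Fin d) (Fin d) ℂ) : Mat d n :=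
  fun a b => ∏ i, σs i (a i) (b i)

/-- `I_d^{(i)} ⊗ K`: the identity on the `i`-th qudit tensored with an operator `K`
on the remaining qudits. -/
def idTensorAt {d n : ℕ} (i : Fin n)
    (K : Matrix ({j : Fin n // j ≠ i} → Fin d) ({j : Fin n // j ≠ i} → Fin d) ℂ) :
    Mat d n :=
  fun a b => if a i = b i then K (fun j => a j) (fun j => b j) else 0

/-- `K ⊗ identity`: an operator acting only on the qudits in `I`. -/
def embedOn {d n : ℕ} (I : Finset (Fin n))
    (K : Matrix ({j : Fin n // j ∈ I} → Fin d) ({j : Fin n // j ∈ I} → Fin d) ℂ) :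
    Mat d n :=
  fun a b => if (∀ j, j ∉ I → a j = b j) then K (fun j => a j) (fun j => b j) else 0

/-- The `n`-th tensor power `φ^{⊗n}` of a single-qudit linear map `φ`. -/
noncomputable def tensorPowMap {d n : ℕ}
    (φ : Matrix (Fin d) (Fin d) ℂ → Matrix (Fin d) (Fin d) ℂ) (X : Mat d n) : Mat d n :=
  fun a b => ∑ s : Cfg d n, ∑ t : Cfg d n,
    X s t * ∏ j, φ (Matrix.single (s j) (t j) 1) (a j) (b j)

/-- The `1 → 1` norm of a map on single-qudit operators. -/
noncomputable def norm1to1 {d : ℕ}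
    (F : Matrix (Fin d) (Fin d) ℂ → Matrix (Fin d) (Fin d) ℂ) : ℝ :=
  sSup { r | ∃ ρ : Matrix (Fin d) (Fin d) ℂ, IsState ρ ∧ r = traceNorm (F ρ) }

/-- The diamond norm of a map on single-qudit operators. -/
noncomputable def diamondNorm {d : ℕ}
    (F : Matrix (Fin d) (Fin d) ℂ → Matrix (Fin d) (Fin d) ℂ) : ℝ :=
  sSup { r | ∃ ρ : Matrix (Fin d × Fin d) (Fin d × Fin d) ℂ, IsState ρ ∧
    r = traceNorm (extendMap F ρ) }

/-- The contraction coefficient (`W₁ → W₁` norm) of a map on `n`-qudit operators. -/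
noncomputable def W1toW1 {d n : ℕ} (Φ : Mat d n → Mat d n) : ℝ :=
  sSup { r | ∃ X : Mat d n, X.IsHermitian ∧ X.trace = 0 ∧ W1 X ≤ 1 ∧ r = W1 (Φ X) }

/-- The von Neumann entropy `S(ρ) = -Tr[ρ ln ρ]` (natural logarithm). -/
noncomputable def vnEntropy {ι : Type} [Fintype ι] [DecidableEq ι] (ρ : Matrix ι ι ℂ) : ℝ :=
  if h : ρ.IsHermitian then -∑ i, h.eigenvalues i * Real.log (h.eigenvalues i) else 0

/-- The logarithm of a self-adjoint matrix, via the spectral decomposition. -/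
noncomputable def matLog {ι : Type} [Fintype ι] [DecidableEq ι] (ρ : Matrix ι ι ℂ) :
    Matrix ι ι ℂ :=
  if h : ρ.IsHermitian then
    (h.eigenvectorUnitary : Matrix ι ι ℂ) *
      Matrix.diagonal (fun i => (Real.log (h.eigenvalues i) : ℂ)) *
      (star (h.eigenvectorUnitary : Matrix ι ι ℂ))
  else 0

/-- The quantum relative entropy `S(ρ‖σ) = Tr[ρ (ln ρ - ln σ)]`. -/
noncomputable def relEntropy {ι : Type} [Fintype ι] [DecidableEq ι]
    (ρ σ : Matrix ι ι ℂ) : ℝ :=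
  ((ρ * (matLog ρ - matLog σ)).trace).re

/-- The Hamming distance between two configurations. -/
def hamming {d n : ℕ} (x y : Cfg d n) : ℕ :=
  (Finset.univ.filter (fun i => x i ≠ y i)).card

/-- Probability distributions on a finite set. -/
def IsProb {α : Type} [Fintype α] (p : α → ℝ) : Prop :=
  (∀ x, 0 ≤ p x) ∧ ∑ x, p x = 1

/-- Couplings of two probability distributions. -/
def IsCoupling {α : Type} [Fintype α] (π : α × α → ℝ) (p q : α → ℝ) : Prop :=
  IsProb π ∧ (∀ x, ∑ y, π (x, y) = p x) ∧ (∀ y, ∑ x, π (x, y) = q y)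

/-- The classical Wasserstein distance of order 1 with respect to the Hamming distance. -/
noncomputable def classicalW1 {d n : ℕ} (p q : Cfg d n → ℝ) : ℝ :=
  sInf { c | ∃ π : Cfg d n × Cfg d n → ℝ, IsCoupling π p q ∧
    c = ∑ x : Cfg d n, ∑ y : Cfg d n, (hamming x y : ℝ) * π (x, y) }

/-- The Lipschitz constant of a function on `[d]^n` with respect to the Hamming distance. -/
noncomputable def classicalLip {d n : ℕ} (f : Cfg d n → ℝ) : ℝ :=
  sSup { r | ∃ x y : Cfg d n, x ≠ y ∧ r = |f x - f y| / (hamming x y : ℝ) }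

/-!
Write `X = X⁺ - X⁻` with `X⁺, X⁻ ≥ 0` of equal trace `t = ‖X‖₁ / 2`. The states
`ωₖ = (X⁻)_{<k} ⊗ (X⁺)_{≥k} / t` interpolate between `ω₀ = X⁺` and `ωₙ = X⁻`, and consecutive
ones have the same partial trace over qudit `k`, so `X = ∑ₖ (ωₖ - ωₖ₊₁)` is an admissible
decomposition with `‖ωₖ - ωₖ₊₁‖₁ ≤ Tr ωₖ + Tr ωₖ₊₁ = ‖X‖₁`. The lower bound is the triangle
inequality for the trace norm.
-/

section TraceNorm

open Matrix
open scoped MatrixOrder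

variable {ι : Type} [Fintype ι] [DecidableEq ι]

lemma traceNorm_eq_re_trace_abs (A : Matrix ι ι ℂ) : traceNorm A = (CFC.abs A).trace.re := by
  have hAA := posSemidef_conjTranspose_mul_self A
  rw [CFC.abs, star_eq_conjTranspose, CFC.sqrt_eq_real_sqrt _ hAA.nonneg, cfcₙ_eq_cfc,
    hAA.1.cfc_eq, IsHermitian.cfc, Unitary.conjStarAlgAut_apply]
  rfl

lemma traceNorm_nonneg (A : Matrix ι ι ℂ) : 0 ≤ traceNorm A := by
  rw [traceNorm_eq_re_trace_abs]
  exact (RCLike.nonneg_iff.mp (CFC.abs_nonneg A).posSemidef.trace_nonneg).1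

lemma traceNorm_zero : traceNorm (0 : Matrix ι ι ℂ) = 0 := by
  simp [traceNorm_eq_re_trace_abs]

lemma traceNorm_eq_sum_abs_eigenvalues {A : Matrix ι ι ℂ} (hA : A.IsHermitian) :
    traceNorm A = ∑ i, |hA.eigenvalues i| := by
  rw [traceNorm_eq_re_trace_abs, CFC.abs_eq_cfc_norm A hA, hA.cfc_eq, IsHermitian.cfc,
    Unitary.conjStarAlgAut_apply, trace_mul_cycle, Unitary.coe_star_mul_self, one_mul,
    trace_diagonal]
  simp

lemma traceNorm_eq_re_trace_posPart_add_negPart {A : Matrix ι ι ℂ}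
    (hA : A.IsHermitian) : traceNorm A = (A⁺).trace.re + (A⁻).trace.re := by
  rw [traceNorm_eq_re_trace_abs, ← CFC.posPart_add_negPart A hA, trace_add, Complex.add_re]

/-- In an eigenbasis of `P - Q`, each eigenvalue is a difference of the nonnegative
diagonal entries of `P` and `Q`. -/
lemma traceNorm_sub_le_of_posSemidef {P Q : Matrix ι ι ℂ} (hP : P.PosSemidef)
    (hQ : Q.PosSemidef) : traceNorm (P - Q) ≤ P.trace.re + Q.trace.re := by
  have hA : (P - Q).IsHermitian := hP.1.sub hQ.1
  set U : Matrix ι ι ℂ := (hA.eigenvectorUnitary : Matrix ι ι ℂ)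
  have hdiag : Uᴴ * P * U - Uᴴ * Q * U = diagonal (RCLike.ofReal ∘ hA.eigenvalues) := by
    have h := hA.conjStarAlgAut_star_eigenvectorUnitary
    rwa [Unitary.conjStarAlgAut_star_apply, Matrix.mul_sub, Matrix.sub_mul] at h
  have habs (i : ι) : |hA.eigenvalues i| ≤ ((Uᴴ * P * U) i i).re + ((Uᴴ * Q * U) i i).re := by
    have hi := congrArg (fun M => (M i i).re) hdiag
    have hp := (Complex.nonneg_iff.mp ((hP.conjTranspose_mul_mul_same U).diag_nonneg (i := i))).1
    have hq := (Complex.nonneg_iff.mp ((hQ.conjTranspose_mul_mul_same U).diag_nonneg (i := i))).1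
    simp only [Matrix.sub_apply, Complex.sub_re, diagonal_apply_eq, Function.comp_apply] at hi
    change _ = hA.eigenvalues i at hi
    rw [abs_le]
    constructor <;> linarith
  have htrace (M : Matrix ι ι ℂ) : ∑ i, ((Uᴴ * M * U) i i).re = M.trace.re := by
    rw [← Complex.re_sum]
    change (Uᴴ * M * U).trace.re = _
    rw [trace_mul_cycle, ← star_eq_conjTranspose,
      Unitary.mul_star_self_of_mem hA.eigenvectorUnitary.2, one_mul]
  calc traceNorm (P - Q) = ∑ i, |hA.eigenvalues i| := traceNorm_eq_sum_abs_eigenvalues hA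
    _ ≤ ∑ i, (((Uᴴ * P * U) i i).re + ((Uᴴ * Q * U) i i).re) :=
      Finset.sum_le_sum fun i _ => habs i
    _ = P.trace.re + Q.trace.re := by rw [Finset.sum_add_distrib, htrace, htrace]

lemma traceNorm_add_le {A B : Matrix ι ι ℂ} (hA : A.IsHermitian) (hB : B.IsHermitian) :
    traceNorm (A + B) ≤ traceNorm A + traceNorm B := by
  have hAB : A + B = (A⁺ + B⁺) - (A⁻ + B⁻) := by
    rw [add_sub_add_comm, CFC.posPart_sub_negPart A hA, CFC.posPart_sub_negPart B hB]
  calc traceNorm (A + B) ≤ (A⁺ + B⁺).trace.re + (A⁻ + B⁻).trace.re := by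
        rw [hAB]
        exact traceNorm_sub_le_of_posSemidef
          ((CFC.posPart_nonneg A).posSemidef.add (CFC.posPart_nonneg B).posSemidef)
          ((CFC.negPart_nonneg A).posSemidef.add (CFC.negPart_nonneg B).posSemidef)
    _ = traceNorm A + traceNorm B := by
        rw [traceNorm_eq_re_trace_posPart_add_negPart hA,
          traceNorm_eq_re_trace_posPart_add_negPart hB, trace_add, trace_add, Complex.add_re,
          Complex.add_re]
        ring

lemma traceNorm_sum_le {κ : Type*} [Fintype κ] {A : κ → Matrix ι ι ℂ}
    (hA : ∀ i, (A i).IsHermitian) : traceNorm (∑ i, A i) ≤ ∑ i, traceNorm (A i) :=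
  Finset.le_sum_of_subadditive_on_pred traceNorm IsHermitian traceNorm_zero.le
    (fun _ _ hA hB => traceNorm_add_le hA hB) (fun _ _ hA hB => hA.add hB) _
    (fun i _ => hA i)

end TraceNorm

section Splice

variable {d n : ℕ}

def splice (k : ℕ) (x y : Cfg d n) : Cfg d n := fun j => if (j : ℕ) < k then x j else y j

@[simp] lemma splice_zero (x y : Cfg d n) : splice 0 x y = y := by
  funext j
  simp [splice]

lemma splice_of_le {k : ℕ} (hk : n ≤ k) (x y : Cfg d n) : splice k x y = x := by
  funext j
  simp [splice, j.2.trans_le hk]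

@[simp] lemma splice_splice_left (k : ℕ) (x y z : Cfg d n) :
    splice k (splice k x y) z = splice k x z := by
  funext j
  by_cases h : (j : ℕ) < k <;> simp [splice, h]

@[simp] lemma splice_splice_right (k : ℕ) (x y z : Cfg d n) :
    splice k x (splice k y z) = splice k x z := by
  funext j
  by_cases h : (j : ℕ) < k <;> simp [splice, h]

lemma splice_update_left_of_le {k : ℕ} {i : Fin n} (hk : k ≤ i) (x y : Cfg d n) (s : Fin d) :
    splice k (Function.update x i s) y = splice k x y := by
  funext j
  by_cases h : (j : ℕ) < k
  · have hj : j ≠ i := fun hji => by omega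
    simp [splice, h, hj]
  · simp [splice, h]

lemma splice_update_right_of_lt {k : ℕ} {i : Fin n} (hk : (i : ℕ) < k) (x y : Cfg d n)
    (s : Fin d) : splice k x (Function.update y i s) = splice k x y := by
  funext j
  by_cases h : (j : ℕ) < k
  · simp [splice, h]
  · have hj : j ≠ i := fun hji => by omega
    simp [splice, h, hj]

lemma splice_succ_update (i : Fin n) (x y : Cfg d n) (s : Fin d) :
    splice (i + 1) (Function.update x i s) y = splice i x (Function.update y i s) := by
  funext j
  rcases lt_trichotomy (j : ℕ) i with h | h | h
  · have hj : j ≠ i := fun hji => by omega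
    simp [splice, h, hj, Nat.lt_succ_of_lt h]
  · obtain rfl : j = i := Fin.ext h
    simp [splice]
  · have hj : j ≠ i := fun hji => by omega
    simp [splice, hj, show ¬ (j : ℕ) < i + 1 by omega, show ¬ (j : ℕ) < i by omega]

def spliceInvolution (k : ℕ) : Equiv.Perm (Cfg d n × Cfg d n) :=
  Function.Involutive.toPerm (fun p => (splice k p.1 p.2, splice k p.2 p.1)) fun p => by
    ext j <;> by_cases h : (j : ℕ) < k <;> simp [splice, h]

lemma sum_sum_splice {M : Type*} [AddCommMonoid M] (k : ℕ) (F : Cfg d n → M) :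
    ∑ x, ∑ y, F (splice k x y) = d ^ n • ∑ x, F x := by
  calc ∑ x, ∑ y, F (splice k x y) = ∑ p, F (spliceInvolution k p).1 :=
        (Fintype.sum_prod_type' _).symm
    _ = ∑ p : Cfg d n × Cfg d n, F p.1 :=
        Equiv.sum_comp (spliceInvolution k) fun p : Cfg d n × Cfg d n => F p.1
    _ = d ^ n • ∑ x, F x := by
        rw [Fintype.sum_prod_type, Finset.sum_comm]
        simp [Finset.smul_sum]

def updateInvolution (i : Fin n) : Equiv.Perm (Fin d × Cfg d n) :=
  Function.Involutive.toPerm (fun p => (p.2 i, Function.update p.2 i p.1)) fun p => by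
    simp

lemma sum_sum_update {M : Type*} [AddCommMonoid M] (i : Fin n) (F : Cfg d n → M) :
    ∑ s, ∑ x, F (Function.update x i s) = d • ∑ x, F x := by
  calc ∑ s, ∑ x, F (Function.update x i s) = ∑ p, F (updateInvolution i p).2 :=
        (Fintype.sum_prod_type' _).symm
    _ = ∑ p : Fin d × Cfg d n, F p.2 :=
        Equiv.sum_comp (updateInvolution i) fun p : Fin d × Cfg d n => F p.2
    _ = d • ∑ x, F x := by simp [Fintype.sum_prod_type]

end Splice

section Marginals

open Matrix

variable {d n : ℕ}

/-- `headMarginal k M = dᵏ (Tr_{≥k} M) ⊗ J` and `tailMarginal k M = J ⊗ dⁿ⁻ᵏ (Tr_{<k} M)`, with `J`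
the all-ones matrix on the remaining qudits; hence `headMarginal k Q ⊙ tailMarginal k P` is
`dⁿ` times the tensor product of the marginals of `Q` on the first `k` qudits and of `P` on the
others. -/
def headMarginal (k : ℕ) (M : Mat d n) : Mat d n :=
  ∑ z, M.submatrix (splice k · z) (splice k · z)

def tailMarginal (k : ℕ) (M : Mat d n) : Mat d n :=
  ∑ z, M.submatrix (splice k z ·) (splice k z ·)

variable {k : ℕ} {M : Mat d n}

lemma headMarginal_apply (x y : Cfg d n) :
    headMarginal k M x y = ∑ z, M (splice k x z) (splice k y z) := by
  simp [headMarginal, Matrix.sum_apply]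

lemma tailMarginal_apply (x y : Cfg d n) :
    tailMarginal k M x y = ∑ z, M (splice k z x) (splice k z y) := by
  simp [tailMarginal, Matrix.sum_apply]

lemma posSemidef_headMarginal (hM : M.PosSemidef) : (headMarginal k M).PosSemidef :=
  posSemidef_sum _ fun _ _ => hM.submatrix _

lemma posSemidef_tailMarginal (hM : M.PosSemidef) : (tailMarginal k M).PosSemidef :=
  posSemidef_sum _ fun _ _ => hM.submatrix _

lemma headMarginal_zero_apply (x y : Cfg d n) : headMarginal 0 M x y = M.trace := by
  simp [headMarginal_apply, Matrix.trace]

lemma tailMarginal_zero_apply (x y : Cfg d n) : tailMarginal 0 M x y = d ^ n * M x y := by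
  simp [tailMarginal_apply]

lemma headMarginal_apply_of_le (hk : n ≤ k) (x y : Cfg d n) :
    headMarginal k M x y = d ^ n * M x y := by
  simp [headMarginal_apply, splice_of_le hk]

lemma tailMarginal_apply_of_le (hk : n ≤ k) (x y : Cfg d n) : tailMarginal k M x y = M.trace := by
  simp [tailMarginal_apply, splice_of_le hk, Matrix.trace]

lemma sum_headMarginal_diag : ∑ x, headMarginal k M x x = d ^ n * M.trace := by
  simp only [headMarginal_apply, sum_sum_splice k fun x => M x x, nsmul_eq_mul, Nat.cast_pow]
  rfl

lemma sum_tailMarginal_diag : ∑ x, tailMarginal k M x x = d ^ n * M.trace := by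
  simp only [tailMarginal_apply]
  rw [Finset.sum_comm, sum_sum_splice k fun x => M x x, nsmul_eq_mul, Nat.cast_pow]
  rfl

lemma trace_headMarginal_hadamard_tailMarginal (hd : 0 < d) (Q P : Mat d n) :
    (headMarginal k Q ⊙ tailMarginal k P).trace = d ^ n * (Q.trace * P.trace) := by
  have hdn : (d : ℂ) ^ n ≠ 0 := pow_ne_zero _ (Nat.cast_ne_zero.mpr hd.ne')
  apply mul_left_cancel₀ hdn
  calc (d : ℂ) ^ n * (headMarginal k Q ⊙ tailMarginal k P).trace
      = ∑ x, ∑ y, headMarginal k Q (splice k x y) (splice k x y) *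
          tailMarginal k P (splice k x y) (splice k x y) := by
        rw [sum_sum_splice k fun z => headMarginal k Q z z * tailMarginal k P z z, nsmul_eq_mul,
          Nat.cast_pow]
        rfl
    _ = (∑ x, headMarginal k Q x x) * ∑ y, tailMarginal k P y y := by
        simp only [headMarginal_apply, tailMarginal_apply, splice_splice_left,
          splice_splice_right, Finset.sum_mul_sum]
    _ = d ^ n * (d ^ n * (Q.trace * P.trace)) := by
        rw [sum_headMarginal_diag, sum_tailMarginal_diag]
        ring

variable {i : Fin n} {s : Fin d}

lemma headMarginal_update (x y : Cfg d n) :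
    headMarginal i M (Function.update x i s) (Function.update y i s) = headMarginal i M x y := by
  simp only [headMarginal_apply, splice_update_left_of_le le_rfl]

lemma tailMarginal_succ_update (x y : Cfg d n) :
    tailMarginal (i + 1) M (Function.update x i s) (Function.update y i s) =
      tailMarginal (i + 1) M x y := by
  simp only [tailMarginal_apply, splice_update_right_of_lt (Nat.lt_succ_self _)]

lemma sum_headMarginal_succ_update (x y : Cfg d n) :
    ∑ s, headMarginal (i + 1) M (Function.update x i s) (Function.update y i s) =
      d * headMarginal i M x y := by
  simp only [headMarginal_apply, splice_succ_update]
  rw [sum_sum_update i fun z => M (splice i x z) (splice i y z), nsmul_eq_mul]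

lemma sum_tailMarginal_update (x y : Cfg d n) :
    ∑ s, tailMarginal i M (Function.update x i s) (Function.update y i s) =
      d * tailMarginal (i + 1) M x y := by
  simp only [tailMarginal_apply, ← splice_succ_update]
  rw [sum_sum_update i fun z => M (splice (i + 1) z x) (splice (i + 1) z y), nsmul_eq_mul]

/-- Both sides equal `d` times the same product: the `i`-th qudit is traced out of the
`P`-factor at stage `i` and out of the `Q`-factor at stage `i + 1`. -/
lemma sum_update_headMarginal_hadamard_tailMarginal (Q P : Mat d n) (x y : Cfg d n) :
    ∑ s, (headMarginal i Q ⊙ tailMarginal i P) (Function.update x i s) (Function.update y i s) =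
      ∑ s, (headMarginal (i + 1) Q ⊙ tailMarginal (i + 1) P)
        (Function.update x i s) (Function.update y i s) := by
  simp only [hadamard_apply, headMarginal_update, tailMarginal_succ_update, ← Finset.mul_sum,
    ← Finset.sum_mul, sum_tailMarginal_update, sum_headMarginal_succ_update]
  ring

end Marginals

section PartialTrace

open Matrix

variable {d n : ℕ}

lemma exists_update_eq_ins (hd : 0 < d) (i : Fin n) (a : {j : Fin n // j ≠ i} → Fin d) :
    ∃ x : Cfg d n, ∀ s, ins i a s = Function.update x i s := by
  refine ⟨ins i a ⟨0, hd⟩, fun s => funext fun j => ?_⟩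
  by_cases h : j = i
  · subst h
    simp [ins]
  · simp [ins, h]

lemma ptrace_eq_of_sum_update_eq (hd : 0 < d) {i : Fin n} {A B : Mat d n}
    (h : ∀ x y, ∑ s, A (Function.update x i s) (Function.update y i s) =
      ∑ s, B (Function.update x i s) (Function.update y i s)) :
    ptrace i A = ptrace i B := by
  funext a b
  obtain ⟨x, hx⟩ := exists_update_eq_ins hd i a
  obtain ⟨y, hy⟩ := exists_update_eq_ins hd i b
  simp only [ptrace, hx, hy]
  exact h x y

lemma ptrace_sub (i : Fin n) (A B : Mat d n) : ptrace i (A - B) = ptrace i A - ptrace i B := by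
  funext a b
  simp [ptrace, Finset.sum_sub_distrib]

end PartialTrace

section Decomposition

open Matrix
open scoped MatrixOrder

variable {d n : ℕ}

lemma exists_posSemidef_path (hd : 0 < d) {P Q : Mat d n} (hP : P.PosSemidef)
    (hQ : Q.PosSemidef) (hPQ : P.trace = Q.trace) :
    ∃ ω : ℕ → Mat d n, ω 0 = P ∧ ω n = Q ∧ (∀ k, (ω k).PosSemidef ∧ (ω k).trace = P.trace) ∧
      ∀ i : Fin n, ptrace i (ω i) = ptrace i (ω (i + 1)) := by
  obtain ⟨t, ht0, ht⟩ := RCLike.nonneg_iff_exists_ofReal.mp hP.trace_nonneg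
  rcases ht0.eq_or_lt with rfl | htpos
  · have hP0 : P = 0 := hP.trace_eq_zero_iff.mp (by simp [← ht])
    have hQ0 : Q = 0 := hQ.trace_eq_zero_iff.mp (by rw [← hPQ, hP0, trace_zero])
    exact ⟨fun _ => 0, hP0.symm, hQ0.symm, fun _ => ⟨.zero, by simp [hP0]⟩, fun _ => rfl⟩
  set c : ℝ := (t * d ^ n)⁻¹
  have hc : (c : ℂ) * t * d ^ n = 1 := by
    have : (t : ℂ) * d ^ n ≠ 0 := by exact_mod_cast (by positivity : t * d ^ n ≠ 0)
    push_cast [c]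
    field_simp
  refine ⟨fun k => (c : ℂ) • (headMarginal k Q ⊙ tailMarginal k P), ?_, ?_, fun k => ⟨?_, ?_⟩,
    fun i => ?_⟩
  · ext x y
    simp only [Matrix.smul_apply, hadamard_apply, headMarginal_zero_apply, tailMarginal_zero_apply,
      smul_eq_mul, ← hPQ, ← ht]
    linear_combination P x y * hc
  · ext x y
    simp only [Matrix.smul_apply, hadamard_apply, headMarginal_apply_of_le le_rfl,
      tailMarginal_apply_of_le le_rfl, smul_eq_mul, ← ht]
    linear_combination Q x y * hc
  · exact (posSemidef_headMarginal hQ).hadamard (posSemidef_tailMarginal hP) |>.smul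
      (Complex.zero_le_real.mpr (by positivity))
  · rw [trace_smul, trace_headMarginal_hadamard_tailMarginal hd, ← hPQ, ← ht, smul_eq_mul]
    linear_combination (t : ℂ) * hc
  · refine ptrace_eq_of_sum_update_eq hd fun x y => ?_
    simp only [Matrix.smul_apply, smul_eq_mul, ← Finset.mul_sum,
      sum_update_headMarginal_hadamard_tailMarginal]

lemma exists_decomposition (hd : 0 < d) {X : Mat d n} (hX : X.IsHermitian)
    (hXtr : X.trace = 0) :
    ∃ Y : Fin n → Mat d n, (∀ i, (Y i).IsHermitian) ∧ (∀ i, ptrace i (Y i) = 0) ∧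
      X = ∑ i, Y i ∧ ∑ i, traceNorm (Y i) ≤ n * traceNorm X := by
  have hPQ : (X⁺).trace = (X⁻).trace := by
    rw [← sub_eq_zero, ← trace_sub, CFC.posPart_sub_negPart X hX, hXtr]
  obtain ⟨ω, hω0, hωn, hω, hωptrace⟩ := exists_posSemidef_path hd
    (CFC.posPart_nonneg X).posSemidef (CFC.negPart_nonneg X).posSemidef hPQ
  have hstep (i : Fin n) : traceNorm (ω i - ω (i + 1)) ≤ traceNorm X := by
    calc traceNorm (ω i - ω (i + 1)) ≤ (ω i).trace.re + (ω (i + 1)).trace.re :=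
          traceNorm_sub_le_of_posSemidef (hω _).1 (hω _).1
      _ = traceNorm X := by
          rw [(hω _).2, (hω _).2, traceNorm_eq_re_trace_posPart_add_negPart hX, hPQ]
  refine ⟨fun i => ω i - ω (i + 1), fun i => (hω _).1.1.sub (hω _).1.1,
    fun i => by rw [ptrace_sub, hωptrace i, sub_self], ?_, ?_⟩
  · rw [Fin.sum_univ_eq_sum_range (fun k => ω k - ω (k + 1)), Finset.sum_range_sub', hω0, hωn,
      CFC.posPart_sub_negPart X hX]
  · calc ∑ i : Fin n, traceNorm (ω i - ω (i + 1)) ≤ ∑ _i : Fin n, traceNorm X :=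
          Finset.sum_le_sum fun i _ => hstep i
      _ = n * traceNorm X := by simp

end Decomposition

section W1

variable {d n : ℕ} {X : Mat d n} {r : ℝ}

lemma nonneg_of_mem_W1Set (hr : r ∈ W1Set X) : 0 ≤ r := by
  obtain ⟨Y, -, -, -, rfl⟩ := hr
  exact mul_nonneg (by norm_num) (Finset.sum_nonneg fun i _ => traceNorm_nonneg (Y i))

lemma half_traceNorm_le_of_mem_W1Set (hr : r ∈ W1Set X) : 1 / 2 * traceNorm X ≤ r := by
  obtain ⟨Y, hY, -, rfl, rfl⟩ := hr
  gcongr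
  exact traceNorm_sum_le hY

end W1

theorem stmt7_general {d n : ℕ} (hd : 2 ≤ d)
    (X : Mat d n) (hX : X.IsHermitian) (hXtr : X.trace = 0) :
    (1 / 2) * traceNorm X ≤ W1 X ∧ W1 X ≤ ((n : ℝ) / 2) * traceNorm X := by
  obtain ⟨Y, hYherm, hYptrace, hXY, hYnorm⟩ := exists_decomposition (by omega) hX hXtr
  have hmem : 1 / 2 * ∑ i, traceNorm (Y i) ∈ W1Set X := ⟨Y, hYherm, hYptrace, hXY, rfl⟩
  constructor
  · exact le_csInf ⟨_, hmem⟩ fun r hr => half_traceNorm_le_of_mem_W1Set hr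
  · calc W1 X ≤ 1 / 2 * ∑ i, traceNorm (Y i) :=
          csInf_le ⟨0, fun r hr => nonneg_of_mem_W1Set hr⟩ hmem
      _ ≤ (n : ℝ) / 2 * traceNorm X := by linarith

theorem stmt7 {d n : ℕ} (hd : 2 ≤ d) (hn : 1 ≤ n)
    (X : Mat d n) (hX : X.IsHermitian) (hXtr : X.trace = 0) :
    (1 / 2) * traceNorm X ≤ W1 X ∧ W1 X ≤ ((n : ℝ) / 2) * traceNorm X :=
  stmt7_general hd X hX hXtr

end QW1
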